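/- arXiv:2101.01970 — 6 statements merged into one kernel-verified Lean document; each statement's English description precedes it below -/
import Mathlib

section
/- If k_d, k_o : [0,T] → ℝ are differentiable and solve the scaled Riccati system, then the function s(t) := k_d(t) + α(N) k_o(t) satisfies −s'(t) = 1 − s(t)²/ν for all t ∈ [0,T] and s(T) = 0. -/
open Set

/-!
Adding `α` times the equation for `k_o` to the equation for `k_d`, the drift terms in `p̄` cancel,
the two terms `± α k_o² / N` cancel, and what remains of the quadratic part is
`k_d² + 2 α k_d k_o + α² k_o² = (k_d + α k_o)²`.
-/

noncomputable section RiccatiSystem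

variable (α n p ν x y : ℝ)

def riccatiDiagRHS : ℝ :=
  -2 * p * α * (x - y / n) - (1 / ν) * (x ^ 2 + (α / n) * y ^ 2) + 1

def riccatiOffRHS : ℝ :=
  2 * p * (x - y / n) - (1 / ν) * (2 * x * y + α * y ^ 2 - y ^ 2 / n)

theorem riccatiDiagRHS_add_mul_riccatiOffRHS :
    riccatiDiagRHS α n p ν x y + α * riccatiOffRHS α n p ν x y = 1 - (x + α * y) ^ 2 / ν := by
  unfold riccatiDiagRHS riccatiOffRHS
  ring

variable {α n p ν} in
theorem hasDerivAt_riccati_combination {kd ko : ℝ → ℝ} {t : ℝ}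
    (hkd : HasDerivAt kd (-riccatiDiagRHS α n p ν (kd t) (ko t)) t)
    (hko : HasDerivAt ko (-riccatiOffRHS α n p ν (kd t) (ko t)) t) :
    HasDerivAt (fun s => kd s + α * ko s) (-(1 - (kd t + α * ko t) ^ 2 / ν)) t := by
  refine (hkd.add (hko.const_mul α)).congr_deriv ?_
  rw [← riccatiDiagRHS_add_mul_riccatiOffRHS]
  ring

end RiccatiSystem

theorem weighted_riccati_combination_general (N : ℕ) (T ν p : ℝ)
    (kd ko : ℝ → ℝ)
    (hkd : ∀ t ∈ Icc (0:ℝ) T, HasDerivAt kd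
        (-(-2 * p * (((N : ℝ) - 1) / N) * (kd t - ko t / N)
            - (1 / ν) * ((kd t) ^ 2 + ((((N : ℝ) - 1) / N) / N) * (ko t) ^ 2) + 1)) t)
    (hkdT : kd T = 0)
    (hko : ∀ t ∈ Icc (0:ℝ) T, HasDerivAt ko
        (-(2 * p * (kd t - ko t / N)
            - (1 / ν) * (2 * kd t * ko t + (((N : ℝ) - 1) / N) * (ko t) ^ 2
                - (ko t) ^ 2 / N))) t)
    (hkoT : ko T = 0) :
    (∀ t ∈ Icc (0:ℝ) T,
        HasDerivAt (fun s => kd s + (((N : ℝ) - 1) / N) * ko s)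
          (-(1 - (kd t + (((N : ℝ) - 1) / N) * ko t) ^ 2 / ν)) t)
      ∧ kd T + (((N : ℝ) - 1) / N) * ko T = 0 :=
  ⟨fun t ht => hasDerivAt_riccati_combination (hkd t ht) (hko t ht),
    by rw [hkdT, hkoT, mul_zero, add_zero]⟩

/-- If `k_d, k_o` solve the scaled Riccati system, then
`s(t) = k_d(t) + α(N) k_o(t)` with `α(N) = (N-1)/N` satisfies
`−s'(t) = 1 − s(t)²/ν` on `[0,T]` and `s(T) = 0`. -/
theorem weighted_riccati_combination (N : ℕ) (hN : 1 ≤ N) (T ν p : ℝ)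
    (hT : 0 < T) (hν : 0 < ν) (kd ko : ℝ → ℝ)
    (hkd : ∀ t ∈ Icc (0:ℝ) T, HasDerivAt kd
        (-(-2 * p * (((N : ℝ) - 1) / N) * (kd t - ko t / N)
            - (1 / ν) * ((kd t) ^ 2 + ((((N : ℝ) - 1) / N) / N) * (ko t) ^ 2) + 1)) t)
    (hkdT : kd T = 0)
    (hko : ∀ t ∈ Icc (0:ℝ) T, HasDerivAt ko
        (-(2 * p * (kd t - ko t / N)
            - (1 / ν) * (2 * kd t * ko t + (((N : ℝ) - 1) / N) * (ko t) ^ 2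
                - (ko t) ^ 2 / N))) t)
    (hkoT : ko T = 0) :
    (∀ t ∈ Icc (0:ℝ) T,
        HasDerivAt (fun s => kd s + (((N : ℝ) - 1) / N) * ko s)
          (-(1 - (kd t + (((N : ℝ) - 1) / N) * ko t) ^ 2 / ν)) t)
      ∧ kd T + (((N : ℝ) - 1) / N) * ko T = 0 :=
  weighted_riccati_combination_general N T ν p kd ko hkd hkdT hko hkoT
end

section
/- Let k_d, k_o : [0,T] → ℝ be differentiable solutions of the scaled Riccati system and let w_1,…,w_N : [0,T] → ℝ^d be differentiable functions solving the controlled linear system. Then the empirical variance σ²(t) = (1/N) Σ_{j=1}^N |w_j(t) − m(t)|², where m(t) = (1/N) Σ_{j=1}^N w_j(t), satisfies (σ²)'(t) = −2(p̄ + (k_d(t) − k_o(t)/N)/ν) σ²(t) for all t ∈ [0,T], and consequently σ²(t) = σ²(0) · exp(−2p̄ t − (2/ν) ∫₀ᵗ (k_d(s) − k_o(s)/N) ds). -/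
open Set

/-!
Every `w_i` obeys `w_i' = v(t) - b(t) w_i` with a forcing `v(t)` common to all `i`, so the mean `m`
obeys the same equation and the forcing cancels in the deviations: `(w_i - m)' = -b (w_i - m)`.
Hence `(‖w_i - m‖²)' = -2b ‖w_i - m‖²`, and the same holds for their average `σ²`. The closed form
follows because `σ²(t) exp(∫₀ᵗ 2b)` has zero derivative on `[0, T]`.
-/

section EmpiricalVariance

variable {ι E : Type*} [Fintype ι] [NormedAddCommGroup E]

noncomputable def empiricalMean [NormedSpace ℝ E] (x : ι → E) : E :=
  (Fintype.card ι : ℝ)⁻¹ • ∑ i, x i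

noncomputable def empiricalVariance [InnerProductSpace ℝ E] (x : ι → E) : ℝ :=
  (Fintype.card ι : ℝ)⁻¹ * ∑ i, ‖x i - empiricalMean x‖ ^ 2

theorem hasDerivAt_empiricalMean [NormedSpace ℝ E] [Nonempty ι] {w : ι → ℝ → E} {v : E}
    {b t : ℝ} (hw : ∀ i, HasDerivAt (w i) (v - b • w i t) t) :
    HasDerivAt (fun s ↦ empiricalMean (w · s)) (v - b • empiricalMean (w · t)) t := by
  have hcard : (Fintype.card ι : ℝ) ≠ 0 := by positivity
  refine ((HasDerivAt.fun_sum fun i _ ↦ hw i).const_smul (Fintype.card ι : ℝ)⁻¹).congr_deriv ?_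
  rw [empiricalMean, Finset.sum_sub_distrib, Finset.sum_const, Finset.card_univ,
    ← Finset.smul_sum, ← Nat.cast_smul_eq_nsmul ℝ, smul_sub, smul_smul, inv_mul_cancel₀ hcard,
    one_smul, smul_comm]

theorem hasDerivAt_sub_empiricalMean [NormedSpace ℝ E] {w : ι → ℝ → E} {v : E} {b t : ℝ}
    (hw : ∀ i, HasDerivAt (w i) (v - b • w i t) t) (i : ι) :
    HasDerivAt (fun s ↦ w i s - empiricalMean (w · s))
      (-b • (w i t - empiricalMean (w · t))) t := by
  have : Nonempty ι := ⟨i⟩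
  exact ((hw i).sub (hasDerivAt_empiricalMean hw)).congr_deriv (by module)

theorem hasDerivAt_empiricalVariance [InnerProductSpace ℝ E] {w : ι → ℝ → E} {v : E} {b t : ℝ}
    (hw : ∀ i, HasDerivAt (w i) (v - b • w i t) t) :
    HasDerivAt (fun s ↦ empiricalVariance (w · s)) (-2 * b * empiricalVariance (w · t)) t := by
  refine ((HasDerivAt.fun_sum fun i _ ↦
    (hasDerivAt_sub_empiricalMean hw i).norm_sq).const_mul _).congr_deriv ?_
  simp only [real_inner_smul_right, real_inner_self_eq_norm_sq, empiricalVariance,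
    Finset.mul_sum]
  exact Finset.sum_congr rfl fun _ _ ↦ by ring

end EmpiricalVariance

theorem hasDerivWithinAt_integral_Icc {E : Type*} [NormedAddCommGroup E] [NormedSpace ℝ E]
    [CompleteSpace E] {g : ℝ → E} {a b x : ℝ} (hg : ContinuousOn g (Icc a b))
    (hx : x ∈ Icc a b) :
    HasDerivWithinAt (fun u ↦ ∫ s in a..u, g s) (g x) (Icc a b) x := by
  have : Fact (x ∈ Icc a b) := ⟨hx⟩
  exact intervalIntegral.integral_hasDerivWithinAt_right
    ((hg.mono (Icc_subset_Icc_right hx.2)).intervalIntegrable_of_Icc hx.1)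
    (hg.stronglyMeasurableAtFilter_nhdsWithin measurableSet_Icc x) (hg x hx)

theorem eq_mul_exp_integral_of_hasDerivWithinAt {f g : ℝ → ℝ} {a b : ℝ}
    (hf : ∀ t ∈ Icc a b, HasDerivWithinAt f (g t * f t) (Icc a b) t)
    (hg : ContinuousOn g (Icc a b)) :
    ∀ t ∈ Icc a b, f t = f a * Real.exp (∫ s in a..t, g s) := by
  set h : ℝ → ℝ := fun u ↦ f u * Real.exp (-∫ s in a..u, g s)
  have hh : ∀ x ∈ Icc a b, HasDerivWithinAt h 0 (Icc a b) x := fun x hx ↦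
    ((hf x hx).mul ((hasDerivWithinAt_integral_Icc hg hx).neg.exp)).congr_deriv (by ring)
  have hconst := constant_of_has_deriv_right_zero (fun x hx ↦ (hh x hx).continuousWithinAt)
    fun x hx ↦ (hh x (Ico_subset_Icc_self hx)).mono_of_mem_nhdsWithin (Icc_mem_nhdsGE_of_mem hx)
  intro t ht
  have hft : f t * Real.exp (-∫ s in a..t, g s) = f a := by
    simpa [h] using hconst t ht
  rw [← hft, mul_assoc, ← Real.exp_add, neg_add_cancel, Real.exp_zero, mul_one]

theorem controlled_linear_variance_decay_general (N d : ℕ)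
    (T ν p : ℝ) (kd ko : ℝ → ℝ)
    (hkd : ∀ t ∈ Icc (0:ℝ) T, HasDerivAt kd
        (-(-2 * p * (((N : ℝ) - 1) / N) * (kd t - ko t / N)
            - (1 / ν) * ((kd t) ^ 2 + ((((N : ℝ) - 1) / N) / N) * (ko t) ^ 2) + 1)) t)
    (hko : ∀ t ∈ Icc (0:ℝ) T, HasDerivAt ko
        (-(2 * p * (kd t - ko t / N)
            - (1 / ν) * (2 * kd t * ko t + (((N : ℝ) - 1) / N) * (ko t) ^ 2
                - (ko t) ^ 2 / N))) t)
    (w : Fin N → ℝ → EuclideanSpace ℝ (Fin d))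
    (hw : ∀ t ∈ Icc (0:ℝ) T, ∀ i : Fin N,
        HasDerivAt (w i)
          ((p - ko t / ν) • ((N : ℝ)⁻¹ • ∑ j, w j t)
            - (p + kd t / ν - ko t / (ν * N)) • w i t) t)
    (σ2 : ℝ → ℝ)
    (hσ2 : ∀ t, σ2 t = (N : ℝ)⁻¹ * ∑ j, ‖w j t - (N : ℝ)⁻¹ • ∑ k, w k t‖ ^ 2) :
    (∀ t ∈ Icc (0:ℝ) T,
        HasDerivAt σ2 (-2 * (p + (kd t - ko t / N) / ν) * σ2 t) t)
      ∧ ∀ t ∈ Icc (0:ℝ) T,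
        σ2 t = σ2 0 * Real.exp (-2 * p * t
            - (2 / ν) * ∫ s in (0:ℝ)..t, (kd s - ko s / N)) := by
  have hσ2_eq : σ2 = fun s ↦ empiricalVariance (w · s) := by
    funext s; simp [hσ2, empiricalVariance, empiricalMean]
  have hderiv : ∀ t ∈ Icc (0:ℝ) T,
      HasDerivAt σ2 (-2 * (p + (kd t - ko t / N) / ν) * σ2 t) t := fun t ht ↦ by
    rw [hσ2_eq]
    refine (hasDerivAt_empiricalVariance (hw t ht)).congr_deriv ?_
    ring
  have hk : ContinuousOn (fun s ↦ kd s - ko s / N) (Icc 0 T) := fun t ht ↦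
    ((hkd t ht).continuousAt.sub ((hko t ht).continuousAt.div_const _)).continuousWithinAt
  refine ⟨hderiv, fun t ht ↦ ?_⟩
  rw [eq_mul_exp_integral_of_hasDerivWithinAt (fun s hs ↦ (hderiv s hs).hasDerivWithinAt)
    ((continuousOn_const.add (hk.div_const ν)).const_mul (-2)) t ht]
  have hint : IntervalIntegrable (fun s ↦ kd s - ko s / N) MeasureTheory.volume 0 t :=
    (hk.mono (Icc_subset_Icc_right ht.2)).intervalIntegrable_of_Icc ht.1
  have hexponent : ∫ s in (0:ℝ)..t, -2 * (p + (kd s - ko s / N) / ν)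
      = -2 * p * t - (2 / ν) * ∫ s in (0:ℝ)..t, (kd s - ko s / N) := by
    rw [show (fun s ↦ -2 * (p + (kd s - ko s / N) / ν))
        = fun s ↦ -2 * p - (2 / ν) * (kd s - ko s / N) from funext fun s ↦ by ring,
      intervalIntegral.integral_sub intervalIntegrable_const (hint.const_mul _),
      intervalIntegral.integral_const, intervalIntegral.integral_const_mul, smul_eq_mul]
    ring
  rw [hexponent]

/-- For the Riccati-controlled linear system, the empirical variance
`σ²(t) = (1/N) Σ_j ‖w_j(t) − m(t)‖²` satisfies
`(σ²)'(t) = −2(p̄ + (k_d(t) − k_o(t)/N)/ν) σ²(t)` and consequently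
`σ²(t) = σ²(0) exp(−2p̄t − (2/ν)∫₀ᵗ (k_d − k_o/N))`. -/
theorem controlled_linear_variance_decay (N d : ℕ) (hN : 1 ≤ N) (hd : 1 ≤ d)
    (T ν p : ℝ) (hT : 0 < T) (hν : 0 < ν) (kd ko : ℝ → ℝ)
    (hkd : ∀ t ∈ Icc (0:ℝ) T, HasDerivAt kd
        (-(-2 * p * (((N : ℝ) - 1) / N) * (kd t - ko t / N)
            - (1 / ν) * ((kd t) ^ 2 + ((((N : ℝ) - 1) / N) / N) * (ko t) ^ 2) + 1)) t)
    (hkdT : kd T = 0)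
    (hko : ∀ t ∈ Icc (0:ℝ) T, HasDerivAt ko
        (-(2 * p * (kd t - ko t / N)
            - (1 / ν) * (2 * kd t * ko t + (((N : ℝ) - 1) / N) * (ko t) ^ 2
                - (ko t) ^ 2 / N))) t)
    (hkoT : ko T = 0)
    (w : Fin N → ℝ → EuclideanSpace ℝ (Fin d))
    (hw : ∀ t ∈ Icc (0:ℝ) T, ∀ i : Fin N,
        HasDerivAt (w i)
          ((p - ko t / ν) • ((N : ℝ)⁻¹ • ∑ j, w j t)
            - (p + kd t / ν - ko t / (ν * N)) • w i t) t)
    (σ2 : ℝ → ℝ)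
    (hσ2 : ∀ t, σ2 t = (N : ℝ)⁻¹ * ∑ j, ‖w j t - (N : ℝ)⁻¹ • ∑ k, w k t‖ ^ 2) :
    (∀ t ∈ Icc (0:ℝ) T,
        HasDerivAt σ2 (-2 * (p + (kd t - ko t / N) / ν) * σ2 t) t)
      ∧ ∀ t ∈ Icc (0:ℝ) T,
        σ2 t = σ2 0 * Real.exp (-2 * p * t
            - (2 / ν) * ∫ s in (0:ℝ)..t, (kd s - ko s / N)) :=
  controlled_linear_variance_decay_general N d T ν p kd ko hkd hko w hw σ2 hσ2
end

section
/- Assume P : ℝ^d × ℝ^d → ℝ is continuous and symmetric, i.e. P(v,w) = P(w,v) for all v,w. Let k_d, k_o solve the scaled Riccati system and let differentiable functions v_1,…,v_N, w_1,…,w_N : [0,T] → ℝ^d solve the open-loop coupled system with w_i(0) = v_i(0) for all i. Then the empirical means m_v(t) = (1/N) Σ_{j=1}^N v_j(t) and m_w(t) = (1/N) Σ_{j=1}^N w_j(t) coincide for all t ∈ [0,T], and m_v'(t) = −(1/ν)(k_d(t) + α(N) k_o(t)) m_v(t) for all t ∈ [0,T]. -/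
/-!
Summing the equations over `i` kills the interaction terms, since a symmetric weight times
`v_j - v_i` is antisymmetric in `(i, j)`; so both `∑ v_i` and `∑ w_i` have derivative
`∑ R_i[w] = c ∑ w_i` with `c = -(1/ν)(k_d + α(N) k_o)`. The two sums thus share their
derivative and their initial value, hence agree on `[0,T]`, and then `∑ v_i` solves the linear
equation with coefficient `c` as well.
-/

open Set

section Interaction

variable {ι R E : Type*} [Fintype ι] [Semiring R] [AddCommGroup E] [Module R E]

theorem Finset.sum_sum_smul_sub_eq_zero {a : ι → ι → R} (ha : ∀ i j, a i j = a j i)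
    (x : ι → E) : ∑ i, ∑ j, a i j • (x j - x i) = 0 := by
  have hswap : ∑ i, ∑ j, a i j • x j = ∑ i, ∑ j, a i j • x i := by
    rw [Finset.sum_comm]
    simp only [ha]
  simp only [smul_sub, Finset.sum_sub_distrib, hswap, sub_self]

theorem Finset.sum_smul_sum_smul_sub_add {a : ι → ι → R} (ha : ∀ i j, a i j = a j i)
    (c : R) (x u : ι → E) :
    ∑ i, (c • ∑ j, a i j • (x j - x i) + u i) = ∑ i, u i := by
  rw [Finset.sum_add_distrib, ← Finset.smul_sum, Finset.sum_sum_smul_sub_eq_zero ha, smul_zero,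
    zero_add]

end Interaction

theorem Finset.sum_smul_add_smul_sum {ι E : Type*} [Fintype ι] [AddCommGroup E] [Module ℝ E]
    (a b : ℝ) (x : ι → E) :
    ∑ i, ((a - b / Fintype.card ι) • x i + (b / Fintype.card ι) • ∑ j, x j)
      = (a + ((Fintype.card ι - 1) / Fintype.card ι) * b) • ∑ j, x j := by
  rcases isEmpty_or_nonempty ι with _ | _
  · simp
  have hn : (Fintype.card ι : ℝ) ≠ 0 := by positivity
  rw [Finset.sum_add_distrib, ← Finset.smul_sum, Finset.sum_const, Finset.card_univ,
    ← Nat.cast_smul_eq_nsmul ℝ, smul_smul, ← add_smul]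
  congr 1
  field_simp
  ring

theorem eqOn_Icc_of_hasDerivAt_eq {E : Type*} [NormedAddCommGroup E] [NormedSpace ℝ E]
    {f g f' : ℝ → E} {a b : ℝ} (hf : ∀ t ∈ Icc a b, HasDerivAt f (f' t) t)
    (hg : ∀ t ∈ Icc a b, HasDerivAt g (f' t) t) (ha : f a = g a) : EqOn f g (Icc a b) :=
  eq_of_has_deriv_right_eq (fun t ht => (hf t (Ico_subset_Icc_self ht)).hasDerivWithinAt)
    (fun t ht => (hg t (Ico_subset_Icc_self ht)).hasDerivWithinAt)
    (fun t ht => (hf t ht).continuousAt.continuousWithinAt)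
    (fun t ht => (hg t ht).continuousAt.continuousWithinAt) ha

theorem open_loop_mean_general (N d : ℕ)
    (T ν p : ℝ)
    (P : EuclideanSpace ℝ (Fin d) → EuclideanSpace ℝ (Fin d) → ℝ)
    (hPsymm : ∀ v w, P v w = P w v)
    (kd ko : ℝ → ℝ)
    (v w : Fin N → ℝ → EuclideanSpace ℝ (Fin d))
    (hv : ∀ t ∈ Icc (0:ℝ) T, ∀ i : Fin N,
        HasDerivAt (v i)
          ((N : ℝ)⁻¹ • ∑ j, P (v i t) (v j t) • (v j t - v i t)
            + (-(1 / ν)) • ((kd t - ko t / N) • w i t + (ko t / N) • ∑ j, w j t)) t)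
    (hw : ∀ t ∈ Icc (0:ℝ) T, ∀ i : Fin N,
        HasDerivAt (w i)
          ((N : ℝ)⁻¹ • ∑ j, p • (w j t - w i t)
            + (-(1 / ν)) • ((kd t - ko t / N) • w i t + (ko t / N) • ∑ j, w j t)) t)
    (hinit : ∀ i, w i 0 = v i 0) :
    (∀ t ∈ Icc (0:ℝ) T, (N : ℝ)⁻¹ • ∑ j, v j t = (N : ℝ)⁻¹ • ∑ j, w j t)
      ∧ ∀ t ∈ Icc (0:ℝ) T,
        HasDerivAt (fun s => (N : ℝ)⁻¹ • ∑ j, v j s)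
          ((-(1 / ν) * (kd t + (((N : ℝ) - 1) / N) * ko t))
            • ((N : ℝ)⁻¹ • ∑ j, v j t)) t := by
  set c : ℝ → ℝ := fun t => -(1 / ν) * (kd t + (((N : ℝ) - 1) / N) * ko t)
  have hfeedback : ∀ t, ∑ i : Fin N, (-(1 / ν)) • ((kd t - ko t / N) • w i t
      + (ko t / N) • ∑ j, w j t) = c t • ∑ j, w j t := fun t => by
    simpa only [Fintype.card_fin, ← Finset.smul_sum, smul_smul] using
      congrArg ((-(1 / ν)) • ·) (Finset.sum_smul_add_smul_sum (kd t) (ko t) (w · t))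
  have hSv : ∀ t ∈ Icc (0:ℝ) T, HasDerivAt (fun s => ∑ j, v j s) (c t • ∑ j, w j t) t :=
    fun t ht => (HasDerivAt.fun_sum (u := Finset.univ) fun i _ => hv t ht i).congr_deriv <| by
      rw [Finset.sum_smul_sum_smul_sub_add (fun i j => hPsymm (v i t) (v j t)), hfeedback]
  have hSw : ∀ t ∈ Icc (0:ℝ) T, HasDerivAt (fun s => ∑ j, w j s) (c t • ∑ j, w j t) t :=
    fun t ht => (HasDerivAt.fun_sum (u := Finset.univ) fun i _ => hw t ht i).congr_deriv <| by
      rw [Finset.sum_smul_sum_smul_sub_add (a := fun _ _ => p) (fun _ _ => rfl), hfeedback]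
  have hsum : EqOn (fun s => ∑ j, v j s) (fun s => ∑ j, w j s) (Icc 0 T) :=
    eqOn_Icc_of_hasDerivAt_eq hSv hSw (by simp only [hinit])
  refine ⟨fun t ht => congrArg _ (hsum ht), fun t ht => ?_⟩
  rw [smul_comm]
  exact ((hSv t ht).const_smul (N : ℝ)⁻¹).congr_deriv (congrArg _ (congrArg _ (hsum ht).symm))

/-- For the open-loop coupled system with matching initial data,
the empirical means of the nonlinear and linearized states coincide on `[0,T]`,
and satisfy `m_v'(t) = −(1/ν)(k_d(t) + α(N) k_o(t)) m_v(t)`. -/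
theorem open_loop_mean (N d : ℕ) (hN : 1 ≤ N) (hd : 1 ≤ d)
    (T ν p : ℝ) (hT : 0 < T) (hν : 0 < ν)
    (P : EuclideanSpace ℝ (Fin d) → EuclideanSpace ℝ (Fin d) → ℝ)
    (hPcont : Continuous fun q : EuclideanSpace ℝ (Fin d) × EuclideanSpace ℝ (Fin d) =>
      P q.1 q.2)
    (hPsymm : ∀ v w, P v w = P w v)
    (kd ko : ℝ → ℝ)
    (hkd : ∀ t ∈ Icc (0:ℝ) T, HasDerivAt kd
        (-(-2 * p * (((N : ℝ) - 1) / N) * (kd t - ko t / N)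
            - (1 / ν) * ((kd t) ^ 2 + ((((N : ℝ) - 1) / N) / N) * (ko t) ^ 2) + 1)) t)
    (hkdT : kd T = 0)
    (hko : ∀ t ∈ Icc (0:ℝ) T, HasDerivAt ko
        (-(2 * p * (kd t - ko t / N)
            - (1 / ν) * (2 * kd t * ko t + (((N : ℝ) - 1) / N) * (ko t) ^ 2
                - (ko t) ^ 2 / N))) t)
    (hkoT : ko T = 0)
    (v w : Fin N → ℝ → EuclideanSpace ℝ (Fin d))
    (hv : ∀ t ∈ Icc (0:ℝ) T, ∀ i : Fin N,
        HasDerivAt (v i)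
          ((N : ℝ)⁻¹ • ∑ j, P (v i t) (v j t) • (v j t - v i t)
            + (-(1 / ν)) • ((kd t - ko t / N) • w i t + (ko t / N) • ∑ j, w j t)) t)
    (hw : ∀ t ∈ Icc (0:ℝ) T, ∀ i : Fin N,
        HasDerivAt (w i)
          ((N : ℝ)⁻¹ • ∑ j, p • (w j t - w i t)
            + (-(1 / ν)) • ((kd t - ko t / N) • w i t + (ko t / N) • ∑ j, w j t)) t)
    (hinit : ∀ i, w i 0 = v i 0) :
    (∀ t ∈ Icc (0:ℝ) T, (N : ℝ)⁻¹ • ∑ j, v j t = (N : ℝ)⁻¹ • ∑ j, w j t)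
      ∧ ∀ t ∈ Icc (0:ℝ) T,
        HasDerivAt (fun s => (N : ℝ)⁻¹ • ∑ j, v j s)
          ((-(1 / ν) * (kd t + (((N : ℝ) - 1) / N) * ko t))
            • ((N : ℝ)⁻¹ • ∑ j, v j t)) t :=
  open_loop_mean_general N d T ν p P hPsymm kd ko v w hv hw hinit
end

section
/- Assume P : ℝ^d × ℝ^d → ℝ is continuous and symmetric, i.e. P(v,w) = P(w,v) for all v,w. Let k_d, k_o solve the scaled Riccati system and let differentiable functions v_1,…,v_N : [0,T] → ℝ^d solve the closed-loop system. Then the empirical mean m(t) = (1/N) Σ_{j=1}^N v_j(t) satisfies m'(t) = −(1/ν)(k_d(t) + α(N) k_o(t)) m(t) for all t ∈ [0,T], and consequently m(t) = m(0) · exp(−(1/ν) ∫₀ᵗ (k_d(s) + α(N) k_o(s)) ds). -/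
open Set

/-!
Summing the closed-loop equations over `i`, the interaction terms cancel in pairs because `P` is
symmetric, while the feedback, a combination of `v_i` and `∑ v_j`, sums to a multiple of the mean.
So `m` solves a scalar linear equation `m' = g m`, whose solution is `exp (∫ g) • m 0`.
-/

theorem sum_sum_smul_sub_eq_zero_of_symm {ι R E : Type*} [Fintype ι] [Semiring R]
    [AddCommGroup E] [Module R E] (a : ι → ι → R) (ha : ∀ i j, a i j = a j i) (x : ι → E) :
    ∑ i, ∑ j, a i j • (x j - x i) = 0 := by
  have hswap : ∑ i, ∑ j, a i j • x j = ∑ i, ∑ j, a i j • x i := by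
    rw [Finset.sum_comm]
    simp only [ha]
  simp only [smul_sub, Finset.sum_sub_distrib, hswap, sub_self]

theorem hasDerivAt_sum_of_symm_interaction {ι E : Type*} [Fintype ι] [NormedAddCommGroup E]
    [NormedSpace ℝ E] (P : E → E → ℝ) (hP : ∀ v w, P v w = P w v) (v : ι → ℝ → E)
    {c r α β t : ℝ}
    (hv : ∀ i, HasDerivAt (v i)
      (c • ∑ j, P (v i t) (v j t) • (v j t - v i t) + r • (α • v i t + β • ∑ j, v j t)) t) :
    HasDerivAt (fun τ => ∑ j, v j τ) ((r * (α + Fintype.card ι * β)) • ∑ j, v j t) t := by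
  convert HasDerivAt.fun_sum (u := Finset.univ) fun i _ => hv i using 1
  rw [Finset.sum_add_distrib, ← Finset.smul_sum,
    sum_sum_smul_sub_eq_zero_of_symm (fun i j => P (v i t) (v j t)) (fun i j => hP _ _)]
  simp only [← Finset.smul_sum, Finset.sum_add_distrib, Finset.sum_const, Finset.card_univ]
  rw [smul_zero, zero_add, ← Nat.cast_smul_eq_nsmul ℝ]
  module

theorem hasDerivWithinAt_integral_Ici_of_continuousOn {E : Type*} [NormedAddCommGroup E]
    [NormedSpace ℝ E] [CompleteSpace E] {g : ℝ → E} {a b x : ℝ}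
    (hg : ContinuousOn g (Icc a b)) (hx : x ∈ Ico a b) :
    HasDerivWithinAt (fun t => ∫ s in a..t, g s) (g x) (Ici x) x := by
  have hIcc : Icc a b ∈ nhdsWithin x (Ioi x) :=
    ordConnected_Icc.mem_nhdsGT (Ico_subset_Icc_self hx) (right_mem_Icc.2 (hx.1.trans hx.2.le))
      hx.2
  have hint : IntervalIntegrable g MeasureTheory.volume a x :=
    (hg.mono (Icc_subset_Icc_right hx.2.le)).intervalIntegrable_of_Icc hx.1
  exact intervalIntegral.integral_hasDerivWithinAt_right hint
    ((hg.stronglyMeasurableAtFilter_nhdsWithin measurableSet_Icc x).filter_mono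
      (nhdsWithin_le_of_mem hIcc))
    ((hg x (Ico_subset_Icc_self hx)).mono_of_mem_nhdsWithin hIcc)

theorem eq_exp_integral_smul_of_hasDerivAt {E : Type*} [NormedAddCommGroup E] [NormedSpace ℝ E]
    {g : ℝ → ℝ} {m : ℝ → E} {a b : ℝ} (hg : ContinuousOn g (Icc a b))
    (hm : ∀ t ∈ Icc a b, HasDerivAt m (g t • m t) t) {t : ℝ} (ht : t ∈ Icc a b) :
    m t = Real.exp (∫ s in a..t, g s) • m a := by
  set F : ℝ → ℝ := fun t => ∫ s in a..t, g s
  have hab : a ≤ b := ht.1.trans ht.2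
  have hFcont : ContinuousOn F (Icc a b) := by
    rw [← uIcc_of_le hab] at hg ⊢
    exact intervalIntegral.continuousOn_primitive_interval hg.integrableOn_uIcc
  -- `exp (-F) • m` has zero right derivative, hence is constant.
  have hconst : Real.exp (-F t) • m t = Real.exp (-F a) • m a := by
    refine constant_of_has_deriv_right_zero (f := fun t => Real.exp (-F t) • m t) ?_
      (fun x hx => ?_) t ht
    · exact (hFcont.neg.rexp).smul fun t ht => (hm t ht).continuousAt.continuousWithinAt
    · have hd := ((hasDerivWithinAt_integral_Ici_of_continuousOn hg hx).fun_neg.exp).smul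
        (hm x (Ico_subset_Icc_self hx)).hasDerivWithinAt
      rwa [smul_smul, ← add_smul, mul_neg, add_neg_cancel, zero_smul] at hd
  have hFa : F a = 0 := intervalIntegral.integral_same
  rw [hFa, neg_zero, Real.exp_zero, one_smul] at hconst
  rw [← hconst, smul_smul, ← Real.exp_add, add_neg_cancel, Real.exp_zero, one_smul]

theorem closed_loop_mean_general (N d : ℕ) (hN : 1 ≤ N)
    (T ν p : ℝ)
    (P : EuclideanSpace ℝ (Fin d) → EuclideanSpace ℝ (Fin d) → ℝ)
    (hPsymm : ∀ v w, P v w = P w v)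
    (kd ko : ℝ → ℝ)
    (hkd : ∀ t ∈ Icc (0:ℝ) T, HasDerivAt kd
        (-(-2 * p * (((N : ℝ) - 1) / N) * (kd t - ko t / N)
            - (1 / ν) * ((kd t) ^ 2 + ((((N : ℝ) - 1) / N) / N) * (ko t) ^ 2) + 1)) t)
    (hko : ∀ t ∈ Icc (0:ℝ) T, HasDerivAt ko
        (-(2 * p * (kd t - ko t / N)
            - (1 / ν) * (2 * kd t * ko t + (((N : ℝ) - 1) / N) * (ko t) ^ 2
                - (ko t) ^ 2 / N))) t)
    (v : Fin N → ℝ → EuclideanSpace ℝ (Fin d))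
    (hv : ∀ t ∈ Icc (0:ℝ) T, ∀ i : Fin N,
        HasDerivAt (v i)
          ((N : ℝ)⁻¹ • ∑ j, P (v i t) (v j t) • (v j t - v i t)
            + (-(1 / ν)) • ((kd t - ko t / N) • v i t + (ko t / N) • ∑ j, v j t)) t)
    (m : ℝ → EuclideanSpace ℝ (Fin d))
    (hm : ∀ t, m t = (N : ℝ)⁻¹ • ∑ j, v j t) :
    (∀ t ∈ Icc (0:ℝ) T,
        HasDerivAt m
          ((-(1 / ν) * (kd t + (((N : ℝ) - 1) / N) * ko t)) • m t) t)
      ∧ ∀ t ∈ Icc (0:ℝ) T,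
        m t = Real.exp (-(1 / ν) * ∫ s in (0:ℝ)..t,
            (kd s + (((N : ℝ) - 1) / N) * ko s)) • m 0 := by
  have hN0 : (N : ℝ) ≠ 0 := Nat.cast_ne_zero.2 (by omega)
  have hm_deriv : ∀ t ∈ Icc (0:ℝ) T,
      HasDerivAt m ((-(1 / ν) * (kd t + (((N : ℝ) - 1) / N) * ko t)) • m t) t := by
    intro t ht
    have hsum := hasDerivAt_sum_of_symm_interaction P hPsymm v (hv t ht)
    rw [Fintype.card_fin] at hsum
    have hcoef : -(1 / ν) * (kd t + (((N : ℝ) - 1) / N) * ko t)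
        = -(1 / ν) * (kd t - ko t / N + N * (ko t / N)) := by
      field_simp
      ring
    rw [hcoef, hm t, smul_comm, funext hm]
    exact hsum.const_smul (N : ℝ)⁻¹
  have hrate : ContinuousOn (fun s => -(1 / ν) * (kd s + (((N : ℝ) - 1) / N) * ko s)) (Icc 0 T) :=
    fun s hs => ((hkd s hs).continuousAt.add
      ((hko s hs).continuousAt.const_mul _)).const_mul _ |>.continuousWithinAt
  refine ⟨hm_deriv, fun t ht => ?_⟩
  rw [← intervalIntegral.integral_const_mul]
  exact eq_exp_integral_smul_of_hasDerivAt hrate hm_deriv ht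

/-- For the closed-loop system with symmetric interaction kernel,
the empirical mean satisfies `m'(t) = −(1/ν)(k_d(t) + α(N) k_o(t)) m(t)` and hence
`m(t) = m(0) exp(−(1/ν)∫₀ᵗ (k_d + α(N) k_o))`. -/
theorem closed_loop_mean (N d : ℕ) (hN : 1 ≤ N) (hd : 1 ≤ d)
    (T ν p : ℝ) (hT : 0 < T) (hν : 0 < ν)
    (P : EuclideanSpace ℝ (Fin d) → EuclideanSpace ℝ (Fin d) → ℝ)
    (hPcont : Continuous fun q : EuclideanSpace ℝ (Fin d) × EuclideanSpace ℝ (Fin d) =>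
      P q.1 q.2)
    (hPsymm : ∀ v w, P v w = P w v)
    (kd ko : ℝ → ℝ)
    (hkd : ∀ t ∈ Icc (0:ℝ) T, HasDerivAt kd
        (-(-2 * p * (((N : ℝ) - 1) / N) * (kd t - ko t / N)
            - (1 / ν) * ((kd t) ^ 2 + ((((N : ℝ) - 1) / N) / N) * (ko t) ^ 2) + 1)) t)
    (hkdT : kd T = 0)
    (hko : ∀ t ∈ Icc (0:ℝ) T, HasDerivAt ko
        (-(2 * p * (kd t - ko t / N)
            - (1 / ν) * (2 * kd t * ko t + (((N : ℝ) - 1) / N) * (ko t) ^ 2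
                - (ko t) ^ 2 / N))) t)
    (hkoT : ko T = 0)
    (v : Fin N → ℝ → EuclideanSpace ℝ (Fin d))
    (hv : ∀ t ∈ Icc (0:ℝ) T, ∀ i : Fin N,
        HasDerivAt (v i)
          ((N : ℝ)⁻¹ • ∑ j, P (v i t) (v j t) • (v j t - v i t)
            + (-(1 / ν)) • ((kd t - ko t / N) • v i t + (ko t / N) • ∑ j, v j t)) t)
    (m : ℝ → EuclideanSpace ℝ (Fin d))
    (hm : ∀ t, m t = (N : ℝ)⁻¹ • ∑ j, v j t) :
    (∀ t ∈ Icc (0:ℝ) T,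
        HasDerivAt m
          ((-(1 / ν) * (kd t + (((N : ℝ) - 1) / N) * ko t)) • m t) t)
      ∧ ∀ t ∈ Icc (0:ℝ) T,
        m t = Real.exp (-(1 / ν) * ∫ s in (0:ℝ)..t,
            (kd s + (((N : ℝ) - 1) / N) * ko s)) • m 0 :=
  closed_loop_mean_general N d hN T ν p P hPsymm kd ko hkd hko v hv m hm
end

section
/- Let T > 0, ν > 0, a ≥ 0, let k_d, β : [0,T] → ℝ be continuous and nonnegative, and let σ : [0,T] → ℝ be differentiable with σ(t) > 0 for all t ∈ [0,T] and σ'(t) ≤ 2a σ(t) + (2/ν) k_d(t) β(t) √(σ(0)) √(σ(t)) for all t ∈ [0,T]. Then for all t ∈ [0,T]: σ(t) ≤ σ(0) e^{2at} (1 + (1/ν) ∫₀ᵗ e^{−as} k_d(s) β(s) ds)². -/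
/-!
The substitution `u = √σ · e^{-at}` linearises the inequality: wherever `σ > 0`,
`σ' ≤ 2aσ + 2h√σ` is equivalent to `u' ≤ e^{-at} h`, so integrating gives
`u(t) ≤ √σ(0) + ∫₀ᵗ e^{-as} h(s) ds`. With `h = (1/ν) k_d β √σ(0)` the right-hand side is
`√σ(0) (1 + (1/ν) ∫₀ᵗ e^{-as} k_d β)`, and squaring gives the bound.
-/

open Set Real MeasureTheory

theorem hasDerivAt_sqrt_mul_exp_neg {σ : ℝ → ℝ} {a t : ℝ} (hσ : DifferentiableAt ℝ σ t)
    (hpos : 0 < σ t) :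
    HasDerivAt (fun s => √(σ s) * exp (-a * s))
      ((deriv σ t / (2 * √(σ t)) - a * √(σ t)) * exp (-a * t)) t := by
  have hsqrt : HasDerivAt (fun s => √(σ s)) (deriv σ t / (2 * √(σ t))) t :=
    hσ.hasDerivAt.sqrt hpos.ne'
  have hexp : HasDerivAt (fun s => exp (-a * s)) (exp (-a * t) * -a) t := by
    simpa using ((hasDerivAt_id t).const_mul (-a)).exp
  exact (hsqrt.mul hexp).congr_deriv (by ring)

theorem sqrt_mul_exp_neg_le_of_deriv_le {σ h : ℝ → ℝ} {a T : ℝ}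
    (hh : IntegrableOn h (Icc 0 T))
    (hσd : ∀ t ∈ Icc 0 T, DifferentiableAt ℝ σ t)
    (hσpos : ∀ t ∈ Ioo 0 T, 0 < σ t)
    (hσ' : ∀ t ∈ Ioo 0 T, deriv σ t ≤ 2 * a * σ t + 2 * h t * √(σ t)) :
    ∀ t ∈ Icc 0 T, √(σ t) * exp (-a * t) ≤ √(σ 0) + ∫ s in (0 : ℝ)..t, exp (-a * s) * h s := by
  intro t ht
  have hsub : Ioo 0 t ⊆ Ioo 0 T := Ioo_subset_Ioo_right ht.2
  have hcont : ContinuousOn (fun s => √(σ s) * exp (-a * s)) (Icc 0 t) := by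
    have hσc : ContinuousOn σ (Icc 0 t) := fun s hs =>
      (hσd s (Icc_subset_Icc_right ht.2 hs)).continuousAt.continuousWithinAt
    exact hσc.sqrt.mul (by fun_prop)
  have hint : IntegrableOn (fun s => exp (-a * s) * h s) (Icc 0 t) :=
    (hh.mono_set (Icc_subset_Icc_right ht.2)).continuousOn_mul (by fun_prop) isCompact_Icc
  have hbound : ∀ s ∈ Ioo 0 t,
      (deriv σ s / (2 * √(σ s)) - a * √(σ s)) * exp (-a * s) ≤ exp (-a * s) * h s := by
    intro s hs
    have hpos : 0 < √(σ s) := sqrt_pos.mpr (hσpos s (hsub hs))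
    have hsq : √(σ s) ^ 2 = σ s := sq_sqrt (hσpos s (hsub hs)).le
    have hdiv : deriv σ s / (2 * √(σ s)) ≤ a * √(σ s) + h s := by
      rw [div_le_iff₀ (by positivity)]
      calc deriv σ s ≤ 2 * a * σ s + 2 * h s * √(σ s) := hσ' s (hsub hs)
        _ = (a * √(σ s) + h s) * (2 * √(σ s)) := by linear_combination (-2 * a) * hsq
    rw [mul_comm (exp _)]
    exact mul_le_mul_of_nonneg_right (by linarith) (exp_pos _).le
  have hftc := intervalIntegral.sub_le_integral_of_hasDeriv_right_of_le ht.1 hcont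
    (fun s hs => (hasDerivAt_sqrt_mul_exp_neg (hσd s (Ioo_subset_Icc_self (hsub hs)))
      (hσpos s (hsub hs))).hasDerivWithinAt) hint hbound
  simp only [mul_zero, exp_zero, mul_one] at hftc
  linarith

theorem le_mul_exp_mul_sq_of_sqrt_mul_exp_neg_le {x y a t B : ℝ} (hx : 0 ≤ x) (hy : 0 ≤ y)
    (h : √x * exp (-a * t) ≤ √y * B) : x ≤ y * exp (2 * a * t) * B ^ 2 := by
  have hsqrt : √x ≤ √y * B * exp (a * t) := by
    calc √x = √x * exp (-a * t) * exp (a * t) := by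
          rw [mul_assoc, ← exp_add, neg_mul, neg_add_cancel, exp_zero, mul_one]
      _ ≤ √y * B * exp (a * t) := mul_le_mul_of_nonneg_right h (exp_pos _).le
  calc x = √x ^ 2 := (sq_sqrt hx).symm
    _ ≤ (√y * B * exp (a * t)) ^ 2 := pow_le_pow_left₀ (sqrt_nonneg x) hsqrt 2
    _ = y * exp (2 * a * t) * B ^ 2 := by
      rw [mul_pow, mul_pow, sq_sqrt hy, sq (exp _), ← exp_add]
      ring_nf

theorem open_loop_upper_comparison_general (T ν a : ℝ)
    (kd β : ℝ → ℝ)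
    (hkdc : ContinuousOn kd (Icc 0 T))
    (hβc : ContinuousOn β (Icc 0 T))
    (σ : ℝ → ℝ)
    (hσd : ∀ t ∈ Icc (0:ℝ) T, DifferentiableAt ℝ σ t)
    (hσpos : ∀ t ∈ Icc (0:ℝ) T, 0 < σ t)
    (hineq : ∀ t ∈ Icc (0:ℝ) T,
        deriv σ t ≤ 2 * a * σ t
          + (2 / ν) * kd t * β t * Real.sqrt (σ 0) * Real.sqrt (σ t)) :
    ∀ t ∈ Icc (0:ℝ) T,
      σ t ≤ σ 0 * Real.exp (2 * a * t)
        * (1 + (1 / ν) * ∫ s in (0:ℝ)..t, Real.exp (-a * s) * kd s * β s) ^ 2 := by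
  intro t ht
  have hσ0 : 0 < σ 0 := hσpos 0 ⟨le_rfl, ht.1.trans ht.2⟩
  have hint : IntegrableOn (fun s => √(σ 0) / ν * (kd s * β s)) (Icc 0 T) :=
    (continuousOn_const.mul (hkdc.mul hβc)).integrableOn_compact isCompact_Icc
  have hcomp := sqrt_mul_exp_neg_le_of_deriv_le hint hσd
    (fun s hs => hσpos s (Ioo_subset_Icc_self hs))
    (fun s hs => (hineq s (Ioo_subset_Icc_self hs)).trans_eq (by ring)) t ht
  have hrhs : √(σ 0) + ∫ s in (0 : ℝ)..t, exp (-a * s) * (√(σ 0) / ν * (kd s * β s))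
      = √(σ 0) * (1 + (1 / ν) * ∫ s in (0 : ℝ)..t, exp (-a * s) * kd s * β s) := by
    have hintegrand : (fun s => exp (-a * s) * (√(σ 0) / ν * (kd s * β s)))
        = fun s => √(σ 0) * (1 / ν) * (exp (-a * s) * kd s * β s) := by
      funext s; ring
    rw [hintegrand, intervalIntegral.integral_const_mul]
    ring
  exact le_mul_exp_mul_sq_of_sqrt_mul_exp_neg_le (hσpos t ht).le hσ0.le (hcomp.trans_eq hrhs)

/-- Comparison estimate (upper variance bound for the open-loop
Riccati control): if `σ' ≤ 2aσ + (2/ν) k_d β √(σ(0)) √σ` on `[0,T]` with `σ > 0`,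
then `σ(t) ≤ σ(0) e^{2at} (1 + (1/ν)∫₀ᵗ e^{−as} k_d(s) β(s) ds)²`. -/
theorem open_loop_upper_comparison (T ν a : ℝ) (hT : 0 < T) (hν : 0 < ν) (ha : 0 ≤ a)
    (kd β : ℝ → ℝ)
    (hkdc : ContinuousOn kd (Icc 0 T)) (hkd0 : ∀ t ∈ Icc (0:ℝ) T, 0 ≤ kd t)
    (hβc : ContinuousOn β (Icc 0 T)) (hβ0 : ∀ t ∈ Icc (0:ℝ) T, 0 ≤ β t)
    (σ : ℝ → ℝ)
    (hσd : ∀ t ∈ Icc (0:ℝ) T, DifferentiableAt ℝ σ t)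
    (hσpos : ∀ t ∈ Icc (0:ℝ) T, 0 < σ t)
    (hineq : ∀ t ∈ Icc (0:ℝ) T,
        deriv σ t ≤ 2 * a * σ t
          + (2 / ν) * kd t * β t * Real.sqrt (σ 0) * Real.sqrt (σ t)) :
    ∀ t ∈ Icc (0:ℝ) T,
      σ t ≤ σ 0 * Real.exp (2 * a * t)
        * (1 + (1 / ν) * ∫ s in (0:ℝ)..t, Real.exp (-a * s) * kd s * β s) ^ 2 :=
  open_loop_upper_comparison_general T ν a kd β hkdc hβc σ hσd hσpos hineq
end

section
/- Let T > 0, ν > 0, b ≥ 0, let k_d, β : [0,T] → ℝ be continuous and nonnegative, and let σ : [0,T] → ℝ be differentiable with σ(t) > 0 for all t ∈ [0,T] and σ'(t) ≥ −2b σ(t) − (2/ν) k_d(t) β(t) √(σ(0)) √(σ(t)) for all t ∈ [0,T]. Then for all t ∈ [0,T]: √(σ(t)) ≥ √(σ(0)) e^{−bt} (1 − (1/ν) ∫₀ᵗ e^{bs} k_d(s) β(s) ds); in particular, for every t such that (1/ν) ∫₀ᵗ e^{bs} k_d(s) β(s) ds ≤ 1, one has σ(t) ≥ σ(0) e^{−2bt}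 (1 − (1/ν) ∫₀ᵗ e^{bs} k_d(s) β(s) ds)². -/
/-!
Put `u = √σ`. Dividing the differential inequality by `2√σ > 0` turns it into the linear
inequality `u' ≥ -b u - g` with `g = (√σ(0)/ν) k_d β`, so the integrating factor makes
`t ↦ e^{bt} u(t) + ∫₀ᵗ e^{bs} g(s) ds` nondecreasing; comparing its values at `0` and `t`
gives the bound on `√σ(t)`, and squaring the nonnegative lower bound gives the bound on `σ(t)`.
-/

open Set Real

theorem hasDerivAt_integral_of_continuousOn_Icc {g : ℝ → ℝ} {a c x : ℝ}
    (hg : ContinuousOn g (Icc a c)) (hx : x ∈ Ioo a c) :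
    HasDerivAt (fun y => ∫ s in a..y, g s) (g x) x := by
  refine intervalIntegral.integral_hasDerivAt_right ?_ ?_
    ((hg x (Ioo_subset_Icc_self hx)).continuousAt (Icc_mem_nhds hx.1 hx.2))
  · refine (hg.mono ?_).intervalIntegrable
    rw [uIcc_of_le hx.1.le]
    exact Icc_subset_Icc le_rfl hx.2.le
  · exact (hg.mono Ioo_subset_Icc_self).stronglyMeasurableAtFilter isOpen_Ioo x hx

theorem monotoneOn_exp_mul_add_integral {u u' g : ℝ → ℝ} {a c b : ℝ}
    (hu : ContinuousOn u (Icc a c)) (hu' : ∀ x ∈ Ioo a c, HasDerivAt u (u' x) x)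
    (hg : ContinuousOn g (Icc a c)) (hineq : ∀ x ∈ Ioo a c, -b * u x - g x ≤ u' x) :
    MonotoneOn (fun x => exp (b * x) * u x + ∫ s in a..x, exp (b * s) * g s) (Icc a c) := by
  rcases lt_or_ge c a with hca | hac
  · rw [Icc_eq_empty_of_lt hca]
    exact fun x hx => hx.elim
  have hexp : Continuous fun x => exp (b * x) := by fun_prop
  have hexpg : ContinuousOn (fun s => exp (b * s) * g s) (Icc a c) := hexp.continuousOn.mul hg
  refine monotoneOn_of_hasDerivWithinAt_nonneg (convex_Icc a c) ?_ ?_ ?_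
    (f' := fun x => exp (b * x) * (u' x + b * u x + g x))
  · refine (hexp.continuousOn.mul hu).add ?_
    have := intervalIntegral.continuousOn_primitive_interval (μ := MeasureTheory.volume)
      (a := a) (b := c) (by rw [uIcc_of_le hac]; exact hexpg.integrableOn_Icc)
    rwa [uIcc_of_le hac] at this
  · intro x hx
    rw [interior_Icc] at hx ⊢
    have hdexp : HasDerivAt (fun x => exp (b * x)) (exp (b * x) * b) x :=
      ((hasDerivAt_id' x).const_mul b).exp.congr_deriv (by ring)
    refine (((hdexp.mul (hu' x hx)).add
      (hasDerivAt_integral_of_continuousOn_Icc hexpg hx)).congr_deriv ?_).hasDerivWithinAt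
    ring
  · intro x hx
    rw [interior_Icc] at hx
    exact mul_nonneg (exp_pos _).le (by linarith [hineq x hx])

theorem neg_mul_sub_le_div_of_le {s d b k : ℝ} (hs : 0 < s)
    (h : -2 * b * s ^ 2 - 2 * k * s ≤ d) : -b * s - k ≤ d / (2 * s) := by
  rw [le_div_iff₀ (by positivity)]
  linarith

theorem le_sqrt_of_exp_mul_sqrt_add_ge {p q b t ν I : ℝ}
    (h : √p ≤ exp (b * t) * √q + √p / ν * I) :
    √p * exp (-b * t) * (1 - 1 / ν * I) ≤ √q := by
  have hexp : exp (-b * t) * exp (b * t) = 1 := by rw [← exp_add]; simp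
  calc √p * exp (-b * t) * (1 - 1 / ν * I)
      = exp (-b * t) * (√p - √p / ν * I) := by ring
    _ ≤ exp (-b * t) * (exp (b * t) * √q) :=
        mul_le_mul_of_nonneg_left (by linarith) (exp_pos _).le
    _ = √q := by rw [← mul_assoc, hexp, one_mul]

theorem mul_exp_mul_sq_le_of_sqrt_le {p q b t m : ℝ} (hp : 0 ≤ p) (hq : 0 ≤ q) (hm : 0 ≤ m)
    (h : √p * exp (-b * t) * m ≤ √q) : p * exp (-2 * b * t) * m ^ 2 ≤ q := by
  have hsq : (√p * exp (-b * t) * m) ^ 2 = p * exp (-2 * b * t) * m ^ 2 := by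
    rw [mul_pow, mul_pow, sq_sqrt hp, ← exp_nat_mul]
    ring_nf
  rw [← hsq, ← Real.le_sqrt (by positivity) hq]
  exact h

theorem open_loop_lower_comparison_general (T ν b : ℝ)
    (kd β : ℝ → ℝ)
    (hkdc : ContinuousOn kd (Icc 0 T))
    (hβc : ContinuousOn β (Icc 0 T))
    (σ : ℝ → ℝ)
    (hσd : ∀ t ∈ Icc (0:ℝ) T, DifferentiableAt ℝ σ t)
    (hσpos : ∀ t ∈ Icc (0:ℝ) T, 0 < σ t)
    (hineq : ∀ t ∈ Icc (0:ℝ) T,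
        -2 * b * σ t - (2 / ν) * kd t * β t * Real.sqrt (σ 0) * Real.sqrt (σ t)
          ≤ deriv σ t) :
    ∀ t ∈ Icc (0:ℝ) T,
      (Real.sqrt (σ 0) * Real.exp (-b * t)
          * (1 - (1 / ν) * ∫ s in (0:ℝ)..t, Real.exp (b * s) * kd s * β s)
        ≤ Real.sqrt (σ t))
      ∧ ((1 / ν) * (∫ s in (0:ℝ)..t, Real.exp (b * s) * kd s * β s) ≤ 1 →
        σ 0 * Real.exp (-2 * b * t)
            * (1 - (1 / ν) * ∫ s in (0:ℝ)..t, Real.exp (b * s) * kd s * β s) ^ 2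
          ≤ σ t) := by
  intro t ht
  have h0 : (0:ℝ) ∈ Icc 0 T := left_mem_Icc.mpr (ht.1.trans ht.2)
  set c := √(σ 0) / ν
  have hmono := monotoneOn_exp_mul_add_integral (a := 0) (c := T) (b := b)
    (u := fun x => √(σ x)) (u' := fun x => deriv σ x / (2 * √(σ x)))
    (g := fun x => c * (kd x * β x))
    (fun x hx => (hσd x hx).continuousAt.continuousWithinAt.sqrt)
    (fun x hx => (hσd x (Ioo_subset_Icc_self hx)).hasDerivAt.sqrt
      (hσpos x (Ioo_subset_Icc_self hx)).ne')
    (continuousOn_const.mul (hkdc.mul hβc))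
    (fun x hx => by
      have hx' := Ioo_subset_Icc_self hx
      refine neg_mul_sub_le_div_of_le (sqrt_pos.mpr (hσpos x hx')) ?_
      rw [sq_sqrt (hσpos x hx').le]
      convert hineq x hx' using 1
      ring)
    h0 ht ht.1
  have hcomp : √(σ 0) ≤
      exp (b * t) * √(σ t) + c * ∫ s in (0:ℝ)..t, exp (b * s) * kd s * β s := by
    simpa [← intervalIntegral.integral_const_mul, mul_left_comm, mul_assoc] using hmono
  have hsqrt := le_sqrt_of_exp_mul_sqrt_add_ge hcomp
  exact ⟨hsqrt, fun hI => mul_exp_mul_sq_le_of_sqrt_le (hσpos 0 h0).le (hσpos t ht).le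
    (by linarith) hsqrt⟩

/-- Comparison estimate (lower variance bound for the open-loop
Riccati control): if `σ' ≥ −2bσ − (2/ν) k_d β √(σ(0)) √σ` on `[0,T]` with `σ > 0`,
then `√(σ(t)) ≥ √(σ(0)) e^{−bt} (1 − (1/ν)∫₀ᵗ e^{bs} k_d(s) β(s) ds)`; in particular,
whenever `(1/ν)∫₀ᵗ e^{bs} k_d(s) β(s) ds ≤ 1` one has
`σ(t) ≥ σ(0) e^{−2bt} (1 − (1/ν)∫₀ᵗ e^{bs} k_d(s) β(s) ds)²`. -/
theorem open_loop_lower_comparison (T ν b : ℝ) (hT : 0 < T) (hν : 0 < ν) (hb : 0 ≤ b)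
    (kd β : ℝ → ℝ)
    (hkdc : ContinuousOn kd (Icc 0 T)) (hkd0 : ∀ t ∈ Icc (0:ℝ) T, 0 ≤ kd t)
    (hβc : ContinuousOn β (Icc 0 T)) (hβ0 : ∀ t ∈ Icc (0:ℝ) T, 0 ≤ β t)
    (σ : ℝ → ℝ)
    (hσd : ∀ t ∈ Icc (0:ℝ) T, DifferentiableAt ℝ σ t)
    (hσpos : ∀ t ∈ Icc (0:ℝ) T, 0 < σ t)
    (hineq : ∀ t ∈ Icc (0:ℝ) T,
        -2 * b * σ t - (2 / ν) * kd t * β t * Real.sqrt (σ 0) * Real.sqrt (σ t)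
          ≤ deriv σ t) :
    ∀ t ∈ Icc (0:ℝ) T,
      (Real.sqrt (σ 0) * Real.exp (-b * t)
          * (1 - (1 / ν) * ∫ s in (0:ℝ)..t, Real.exp (b * s) * kd s * β s)
        ≤ Real.sqrt (σ t))
      ∧ ((1 / ν) * (∫ s in (0:ℝ)..t, Real.exp (b * s) * kd s * β s) ≤ 1 →
        σ 0 * Real.exp (-2 * b * t)
            * (1 - (1 / ν) * ∫ s in (0:ℝ)..t, Real.exp (b * s) * kd s * β s) ^ 2
          ≤ σ t) :=
  open_loop_lower_comparison_general T ν b kd β hkdc hβc σ hσd hσpos hineq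
end
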